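/- The number of parking functions of size n whose parking permutation avoids 123, 213, and 231 equals 2n − 1. -/

import Mathlib

/-!
A permutation avoids 123, 213 and 231 exactly when each of its ascents starts at the value `0`;
counting, for each position, the positions holding smaller values shows that such a permutation
is `m, m - 1, …, 1` with `0` inserted at some position `j`. A car that ends in spot `t` parks
there exactly when every spot from its preference up to `t` holds an earlier car, i.e. a smaller
value of the parking permutation. For the permutations above this leaves each car a single
preference, except the car right after the `0`, which may also prefer spot `j`; this gives
`(m + 1) + m` parking functions.
-/

open Finset

noncomputable section

/-- The parking process over the first `k` cars (cars are `0,...,k-1`, i.e. cars `1,...,k`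
in 1-indexed terms): returns `some occ` where `occ` maps each spot to the car parked there
(`none` meaning empty), or `none` if some car failed to park.  Car `c` drives to its
preferred spot `f c` and parks at the first free spot with index `≥ f c`, failing if
no such spot exists. -/
def parkAux {n : ℕ} (f : Fin n → Fin n) : ℕ → Option (Fin n → Option (Fin n))
  | 0 => some fun _ => none
  | k + 1 =>
    (parkAux f k).bind fun occ =>
      if h : k < n then
        if hS : (Finset.univ.filter fun s => f ⟨k, h⟩ ≤ s ∧ occ s = none).Nonempty then
          some (Function.update occ
            ((Finset.univ.filter fun s => f ⟨k, h⟩ ≤ s ∧ occ s = none).min' hS)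
            (some ⟨k, h⟩))
        else none
      else some occ

/-- All `n` cars park successfully. -/
def AllPark {n : ℕ} (f : Fin n → Fin n) : Prop := (parkAux f n).isSome

/-- `f` is a parking function: for every `i ∈ [n]`, at least `i` cars prefer
the first `i` spots.  (Here `i : Fin n` denotes the `(i+1)`-st spot, 0-indexed.) -/
def IsParkingFunction {n : ℕ} (f : Fin n → Fin n) : Prop :=
  ∀ i : Fin n, i.val + 1 ≤ (Finset.univ.filter fun j => f j ≤ i).card

/-- `ρ` is the parking permutation of `f`: after all cars have parked,
spot `i` is occupied by car `ρ i`. -/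
def IsParkingPerm {n : ℕ} (f : Fin n → Fin n) (ρ : Equiv.Perm (Fin n)) : Prop :=
  parkAux f n = some fun i => some (ρ i)

/-- `π` contains `σ` as a pattern. -/
def ContainsPattern {n m : ℕ} (π : Equiv.Perm (Fin n)) (σ : Equiv.Perm (Fin m)) : Prop :=
  ∃ g : Fin m → Fin n, StrictMono g ∧ ∀ a b : Fin m, σ a < σ b ↔ π (g a) < π (g b)

/-- `ρ` avoids every pattern in the list `pats`. -/
def AvoidsAll {n : ℕ} (ρ : Equiv.Perm (Fin n)) (pats : List (Equiv.Perm (Fin 3))) : Prop :=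
  ∀ σ ∈ pats, ¬ ContainsPattern ρ σ

/-- The number of parking functions of size `n` whose parking permutation avoids
all patterns in `pats`. -/
def pk (n : ℕ) (pats : List (Equiv.Perm (Fin 3))) : ℕ :=
  Nat.card {f : Fin n → Fin n // IsParkingFunction f ∧
    ∃ ρ : Equiv.Perm (Fin n), IsParkingPerm f ρ ∧ AvoidsAll ρ pats}

def p123 : Equiv.Perm (Fin 3) := Equiv.ofBijective ![0, 1, 2] (by decide)
def p132 : Equiv.Perm (Fin 3) := Equiv.ofBijective ![0, 2, 1] (by decide)
def p213 : Equiv.Perm (Fin 3) := Equiv.ofBijective ![1, 0, 2] (by decide)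
def p231 : Equiv.Perm (Fin 3) := Equiv.ofBijective ![1, 2, 0] (by decide)
def p312 : Equiv.Perm (Fin 3) := Equiv.ofBijective ![2, 0, 1] (by decide)
def p321 : Equiv.Perm (Fin 3) := Equiv.ofBijective ![2, 1, 0] (by decide)

section

variable {n : ℕ}

/-- The value of `parkAux f k` when the first `k` cars have parked as in the final
arrangement `ρ`. -/
def occupancy (ρ : Equiv.Perm (Fin n)) (k : ℕ) : Fin n → Option (Fin n) :=
  fun s => if (ρ s : ℕ) < k then some (ρ s) else none

def ParksAt (f : Fin n → Fin n) (ρ : Equiv.Perm (Fin n)) (t : Fin n) : Prop :=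
  f (ρ t) ≤ t ∧ ∀ s, f (ρ t) ≤ s → s < t → ρ s < ρ t

theorem parkAux_succ_of_eq_some (f : Fin n → Fin n) {k : ℕ} (hk : k < n)
    {o : Fin n → Option (Fin n)} (h : parkAux f k = some o) :
    parkAux f (k + 1) =
      if hS : (univ.filter fun s => f ⟨k, hk⟩ ≤ s ∧ o s = none).Nonempty then
        some (Function.update o ((univ.filter fun s => f ⟨k, hk⟩ ≤ s ∧ o s = none).min' hS)
          (some ⟨k, hk⟩))
      else none := by
  rw [parkAux, h, Option.bind_some, dif_pos hk]

theorem occupancy_succ_eq_update (ρ : Equiv.Perm (Fin n)) {k : ℕ} (hk : k < n) :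
    occupancy ρ (k + 1) =
      Function.update (occupancy ρ k) (ρ.symm ⟨k, hk⟩) (some ⟨k, hk⟩) := by
  funext s
  rcases eq_or_ne s (ρ.symm ⟨k, hk⟩) with rfl | hs
  · simp [occupancy]
  · have : (ρ s : ℕ) ≠ k := fun h => hs (ρ.eq_symm_apply.mpr (Fin.ext h))
    simp only [occupancy, Function.update_of_ne hs]
    split_ifs <;> first | rfl | omega

theorem occupancy_eq_none_iff (ρ : Equiv.Perm (Fin n)) (k : ℕ) (s : Fin n) :
    occupancy ρ k s = none ↔ k ≤ ρ s := by
  simp [occupancy]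

theorem parkAux_succ_eq_occupancy {f : Fin n → Fin n} {ρ : Equiv.Perm (Fin n)} {k : ℕ}
    (hk : k < n) (h : parkAux f k = some (occupancy ρ k))
    (hpark : ParksAt f ρ (ρ.symm ⟨k, hk⟩)) :
    parkAux f (k + 1) = some (occupancy ρ (k + 1)) := by
  obtain ⟨hle, hprev⟩ := hpark
  simp only [Equiv.apply_symm_apply] at hle hprev
  rw [parkAux_succ_of_eq_some f hk h]
  set S := univ.filter fun s => f ⟨k, hk⟩ ≤ s ∧ occupancy ρ k s = none
  have htS : ρ.symm ⟨k, hk⟩ ∈ S :=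
    mem_filter.mpr ⟨mem_univ _, hle, by simp [occupancy_eq_none_iff]⟩
  have hmin : S.min' ⟨_, htS⟩ = ρ.symm ⟨k, hk⟩ := by
    refine le_antisymm (S.min'_le _ htS) (not_lt.mp fun hlt => ?_)
    obtain ⟨-, hpm, hm⟩ := mem_filter.mp (S.min'_mem ⟨_, htS⟩)
    have := Fin.lt_def.mp (hprev _ hpm hlt)
    rw [occupancy_eq_none_iff] at hm
    dsimp only at this
    omega
  rw [dif_pos ⟨_, htS⟩, hmin, occupancy_succ_eq_update ρ hk]

theorem parkAux_eq_occupancy_of_succ {f : Fin n → Fin n} {ρ : Equiv.Perm (Fin n)} {k : ℕ}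
    (hk : k < n) (h : parkAux f (k + 1) = some (occupancy ρ (k + 1))) :
    parkAux f k = some (occupancy ρ k) ∧ ParksAt f ρ (ρ.symm ⟨k, hk⟩) := by
  obtain ⟨o, ho, h⟩ := Option.bind_eq_some_iff.mp h
  rw [dif_pos hk] at h
  split_ifs at h with hS
  set S := univ.filter fun s => f ⟨k, hk⟩ ≤ s ∧ o s = none
  obtain ⟨-, hpm, hm⟩ := mem_filter.mp (S.min'_mem hS)
  obtain ⟨hkm, hrest⟩ := Function.update_eq_iff.mp (Option.some_injective _ h)
  have hρm : ρ (S.min' hS) = ⟨k, hk⟩ := by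
    simp only [occupancy] at hkm
    split_ifs at hkm
    exact (Option.some_injective _ hkm).symm
  have hm_eq : S.min' hS = ρ.symm ⟨k, hk⟩ := ρ.eq_symm_apply.mpr hρm
  have ho_eq : o = occupancy ρ k := by
    rw [occupancy_succ_eq_update ρ hk, ← hm_eq] at hrest
    funext s
    rcases eq_or_ne s (S.min' hS) with rfl | hs
    · rw [hm, eq_comm, occupancy_eq_none_iff, hρm]
    · simpa [Function.update_of_ne hs] using hrest s hs
  refine ⟨ho_eq ▸ ho, ?_⟩
  rw [← hm_eq, ParksAt, hρm]
  refine ⟨hpm, fun s hps hsm => ?_⟩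
  have hs : s ∉ S := fun hs => (S.min'_le s hs).not_gt hsm
  have : ¬ k ≤ ρ s := by
    rw [← occupancy_eq_none_iff, ← ho_eq]
    exact fun hos => hs (mem_filter.mpr ⟨mem_univ s, hps, hos⟩)
  exact Fin.lt_def.mpr (by dsimp only; omega)

theorem parkAux_eq_occupancy_iff (f : Fin n → Fin n) (ρ : Equiv.Perm (Fin n)) {k : ℕ}
    (hk : k ≤ n) :
    parkAux f k = some (occupancy ρ k) ↔ ∀ t, (ρ t : ℕ) < k → ParksAt f ρ t := by
  induction k with
  | zero => simp [parkAux, occupancy, funext_iff]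
  | succ k ih =>
    have hk' : k < n := hk
    constructor
    · intro h t ht
      obtain ⟨hprev, hlast⟩ := parkAux_eq_occupancy_of_succ hk' h
      rcases Nat.lt_succ_iff_lt_or_eq.mp ht with ht | ht
      · exact (ih hk'.le).mp hprev t ht
      · rwa [show t = ρ.symm ⟨k, hk'⟩ from ρ.eq_symm_apply.mpr (Fin.ext ht)]
    · intro h
      exact parkAux_succ_eq_occupancy hk' ((ih hk'.le).mpr fun t ht => h t (by omega))
        (h _ (by simp))

theorem isParkingPerm_iff (f : Fin n → Fin n) (ρ : Equiv.Perm (Fin n)) :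
    IsParkingPerm f ρ ↔ ∀ t, ParksAt f ρ t := by
  have : occupancy ρ n = fun s => some (ρ s) := by
    funext s; simp [occupancy]
  rw [IsParkingPerm, ← this, parkAux_eq_occupancy_iff f ρ le_rfl]
  simp

theorem IsParkingPerm.isParkingFunction {f : Fin n → Fin n} {ρ : Equiv.Perm (Fin n)}
    (h : IsParkingPerm f ρ) : IsParkingFunction f := by
  intro i
  have hle (t : Fin n) : f (ρ t) ≤ t := ((isParkingPerm_iff f ρ).mp h t).1
  calc i.val + 1 = #(Iic i) := (Fin.card_Iic i).symm
    _ ≤ #{t | f (ρ t) ≤ i} := card_le_card fun t ht => mem_filter.mpr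
        ⟨mem_univ t, (hle t).trans (mem_Iic.mp ht)⟩
    _ = #{c | f c ≤ i} := card_equiv ρ (by simp)

theorem containsPattern_of_lt_of_lt (ρ : Equiv.Perm (Fin n)) (σ : Equiv.Perm (Fin 3))
    {x y z : Fin n} (hxy : x < y) (hyz : y < z)
    (h : ∀ a b, σ a < σ b → ρ (![x, y, z] a) < ρ (![x, y, z] b)) :
    ContainsPattern ρ σ := by
  refine ⟨![x, y, z], Fin.strictMono_iff_lt_succ.mpr ?_, fun a b => ⟨h a b, fun hab => ?_⟩⟩
  · intro i
    fin_cases i <;> simpa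
  · rcases lt_trichotomy (σ a) (σ b) with hlt | heq | hgt
    · exact hlt
    · cases σ.injective heq; exact absurd hab (lt_irrefl _)
    · exact absurd (h b a hgt) hab.not_gt

theorem Equiv.Perm.val_apply_eq_card_filter_lt (ρ : Equiv.Perm (Fin n)) (i : Fin n) :
    (ρ i : ℕ) = #{k | ρ k < ρ i} := by
  rw [← Fin.card_Iio]
  exact (card_equiv ρ (by simp)).symm

end

section

variable {m : ℕ}

def AscentsStartAtZero (ρ : Equiv.Perm (Fin (m + 1))) : Prop :=
  ∀ a b, a < b → ρ a < ρ b → ρ a = 0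

theorem avoidsAll_iff_ascentsStartAtZero (ρ : Equiv.Perm (Fin (m + 1))) :
    AvoidsAll ρ [p123, p213, p231] ↔ AscentsStartAtZero ρ := by
  constructor
  · intro hA a b hab hρ
    by_contra ha
    set j := ρ.symm 0
    have hj : ρ j = 0 := ρ.apply_symm_apply 0
    have hja : ρ j < ρ a := hj ▸ Fin.pos_iff_ne_zero.mpr ha
    have hjb : ρ j < ρ b := hja.trans hρ
    rcases lt_trichotomy j a with h1 | rfl | h1
    · refine hA p123 (by simp) (containsPattern_of_lt_of_lt ρ p123 h1 hab ?_)
      intro u v; fin_cases u <;> fin_cases v <;> simp [p123, hja, hjb, hρ]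
    · exact lt_irrefl _ hja
    rcases lt_trichotomy j b with h2 | rfl | h2
    · refine hA p213 (by simp) (containsPattern_of_lt_of_lt ρ p213 h1 h2 ?_)
      intro u v; fin_cases u <;> fin_cases v <;> simp [p213, hja, hjb, hρ]
    · exact lt_irrefl _ hjb
    · refine hA p231 (by simp) (containsPattern_of_lt_of_lt ρ p231 hab h2 ?_)
      intro u v; fin_cases u <;> fin_cases v <;> simp [p231, hja, hjb, hρ]
  · rintro h σ hσ ⟨g, hg, hiff⟩
    have asc (a b : Fin 3) (hab : a < b) (hσab : σ a < σ b) : ρ (g a) = 0 :=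
      h _ _ (hg hab) ((hiff a b).mp hσab)
    have two_zeros (a b : Fin 3) (hab : a < b) (ha : ρ (g a) = 0) (hb : ρ (g b) = 0) : False :=
      (hg hab).ne (ρ.injective (ha.trans hb.symm))
    simp only [List.mem_cons, List.not_mem_nil, or_false] at hσ
    rcases hσ with rfl | rfl | rfl
    · exact two_zeros 0 1 (by decide) (asc 0 1 (by decide) (by decide))
        (asc 1 2 (by decide) (by decide))
    · exact two_zeros 0 1 (by decide) (asc 0 2 (by decide) (by decide))
        (asc 1 2 (by decide) (by decide))
    · have h20 := (hiff 2 0).mp (by decide)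
      rw [asc 0 1 (by decide) (by decide)] at h20
      exact Fin.not_lt_zero _ h20

theorem AscentsStartAtZero.apply_lt_apply_iff {ρ : Equiv.Perm (Fin (m + 1))}
    (h : AscentsStartAtZero ρ) (i k : Fin (m + 1)) :
    ρ k < ρ i ↔ ρ i ≠ 0 ∧ (ρ k = 0 ∨ i < k) := by
  constructor
  · intro hki
    refine ⟨Fin.ne_zero_of_lt hki, ?_⟩
    rcases lt_trichotomy i k with hik | rfl | hki'
    · exact Or.inr hik
    · exact absurd hki (lt_irrefl _)
    · exact Or.inl (h k i hki' hki)
  · rintro ⟨hi, hk | hik⟩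
    · exact hk ▸ Fin.pos_iff_ne_zero.mpr hi
    · refine lt_of_le_of_ne (not_lt.mp fun hρ => hi (h i k hik hρ)) ?_
      exact fun he => hik.ne' (ρ.injective he)

theorem AscentsStartAtZero.eq_of_symm_zero_eq {ρ ρ' : Equiv.Perm (Fin (m + 1))}
    (h : AscentsStartAtZero ρ) (h' : AscentsStartAtZero ρ') (h0 : ρ.symm 0 = ρ'.symm 0) :
    ρ = ρ' := by
  have hzero (i : Fin (m + 1)) : ρ i = 0 ↔ ρ' i = 0 := by
    rw [← ρ.eq_symm_apply, ← ρ'.eq_symm_apply, h0]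
  ext i
  rw [ρ.val_apply_eq_card_filter_lt, ρ'.val_apply_eq_card_filter_lt]
  congr 1
  ext k
  simp only [mem_filter, mem_univ, true_and, h.apply_lt_apply_iff, h'.apply_lt_apply_iff, ne_eq,
    hzero]

/-- `m, m - 1, …, 1` with `0` inserted at position `j`. -/
def revZeroAt (j : Fin (m + 1)) : Equiv.Perm (Fin (m + 1)) :=
  Fin.cycleRange j.rev * Fin.revPerm

theorem revZeroAt_val (j i : Fin (m + 1)) :
    (revZeroAt j i : ℕ) = if i = j then 0 else if i < j then m - i else m + 1 - i := by
  simp only [revZeroAt, Equiv.Perm.mul_apply, Fin.revPerm_apply]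
  rcases lt_trichotomy i j with h | rfl | h
  · rw [Fin.cycleRange_of_gt (Fin.rev_lt_rev.mpr h), if_neg h.ne, if_pos h, Fin.val_rev]
    omega
  · simp
  · rw [Fin.coe_cycleRange_of_lt (Fin.rev_lt_rev.mpr h), if_neg h.ne', if_neg h.not_gt,
      Fin.val_rev]
    have := i.isLt
    omega

theorem revZeroAt_self (j : Fin (m + 1)) : revZeroAt j j = 0 := by
  simp [revZeroAt]

theorem revZeroAt_symm_zero (j : Fin (m + 1)) : (revZeroAt j).symm 0 = j := by
  rw [Equiv.symm_apply_eq, revZeroAt_self]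

theorem ascentsStartAtZero_revZeroAt (j : Fin (m + 1)) : AscentsStartAtZero (revZeroAt j) := by
  intro a b hab hρ
  have ha := revZeroAt_val j a
  have hb := revZeroAt_val j b
  simp only [Fin.ext_iff, Fin.lt_def, Fin.val_zero] at ha hb hab hρ ⊢
  have := b.isLt
  split_ifs at ha hb <;> omega

theorem AscentsStartAtZero.parksAt_iff {ρ : Equiv.Perm (Fin (m + 1))} (h : AscentsStartAtZero ρ)
    (f : Fin (m + 1) → Fin (m + 1)) (t : Fin (m + 1)) :
    ParksAt f ρ t ↔ f (ρ t) = t ∨ (ρ (f (ρ t)) = 0 ∧ (t : ℕ) = f (ρ t) + 1) := by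
  set p := f (ρ t)
  constructor
  · rintro ⟨hpt, hprev⟩
    rcases eq_or_lt_of_le hpt with hpt | hpt
    · exact Or.inl hpt
    have hp0 : ρ p = 0 := h p t hpt (hprev p le_rfl hpt)
    refine Or.inr ⟨hp0, ?_⟩
    by_contra hne
    have hpt' := Fin.lt_def.mp hpt
    let s : Fin (m + 1) := ⟨p + 1, by omega⟩
    have hps : p < s := Fin.lt_def.mpr (Nat.lt_succ_self _)
    have hst : s < t := Fin.lt_def.mpr (by simp only [s]; omega)
    have hs0 : ρ s = 0 := h s t hst (hprev s hps.le hst)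
    exact hps.ne (ρ.injective (hp0.trans hs0.symm))
  · rintro (hpt | ⟨hp0, htp⟩)
    · exact ⟨hpt.le, fun s hps hst => ((hps.trans_lt hst).ne hpt).elim⟩
    · refine ⟨Fin.le_def.mpr (by omega), fun s hps hst => ?_⟩
      have hsp : s = p := Fin.ext (by rw [Fin.le_def] at hps; rw [Fin.lt_def] at hst; omega)
      have htp' : t ≠ p := fun he => by rw [he] at htp; omega
      rw [hsp, hp0, Fin.pos_iff_ne_zero, ← hp0]
      exact fun he => htp' (ρ.injective he)

theorem AscentsStartAtZero.eq_revZeroAt {ρ : Equiv.Perm (Fin (m + 1))}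
    (h : AscentsStartAtZero ρ) : ρ = revZeroAt (ρ.symm 0) :=
  h.eq_of_symm_zero_eq (ascentsStartAtZero_revZeroAt _) (revZeroAt_symm_zero _).symm

theorem isParkingPerm_revZeroAt_iff (f : Fin (m + 1) → Fin (m + 1)) (j : Fin (m + 1)) :
    IsParkingPerm f (revZeroAt j) ↔
      ∀ t, f (revZeroAt j t) = t ∨ (f (revZeroAt j t) = j ∧ (t : ℕ) = j + 1) := by
  simp only [isParkingPerm_iff, (ascentsStartAtZero_revZeroAt j).parksAt_iff,
    ← Equiv.eq_symm_apply, revZeroAt_symm_zero]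
  exact forall_congr' fun t => or_congr_right (and_congr_right fun hj => by rw [hj])

/-- `inl j`: every car parks where it prefers; `inr i`: the car in spot `i + 1` prefers
spot `i`, where car `0` parks. -/
def indexedParkingFunction : Fin (m + 1) ⊕ Fin m → Fin (m + 1) → Fin (m + 1)
  | .inl j => (revZeroAt j).symm
  | .inr i => Function.update id i.succ i.castSucc ∘ (revZeroAt i.castSucc).symm

theorem indexedParkingFunction_injective :
    Function.Injective (indexedParkingFunction (m := m)) := by
  have hne (i : Fin m) : i.castSucc ≠ i.succ := Fin.castSucc_lt_succ.ne
  have inl_ne_inr (i : Fin m) :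
      indexedParkingFunction (.inl i.castSucc) ≠ indexedParkingFunction (.inr i) := fun h => by
    have := congrFun h (revZeroAt i.castSucc i.succ)
    simp only [indexedParkingFunction, Equiv.symm_apply_apply, Function.comp_apply,
      Function.update_self] at this
    exact hne i this.symm
  rintro (j | i) (j' | i') h <;> have h0 := congrFun h 0 <;>
    simp only [indexedParkingFunction, Function.comp_apply, revZeroAt_symm_zero,
      Function.update_of_ne (hne _), id] at h0
  · rw [h0]
  · exact (inl_ne_inr i' (h0 ▸ h)).elim
  · exact (inl_ne_inr i (h0 ▸ h.symm)).elim
  · rw [Fin.castSucc_inj.mp h0]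

theorem mem_range_indexedParkingFunction_iff (f : Fin (m + 1) → Fin (m + 1)) :
    f ∈ Set.range indexedParkingFunction ↔
      ∃ ρ, IsParkingPerm f ρ ∧ AscentsStartAtZero ρ := by
  constructor
  · rintro ⟨j | i, rfl⟩
    · refine ⟨revZeroAt j, (isParkingPerm_revZeroAt_iff _ j).mpr fun t => Or.inl ?_,
        ascentsStartAtZero_revZeroAt j⟩
      simp [indexedParkingFunction]
    · refine ⟨revZeroAt i.castSucc, (isParkingPerm_revZeroAt_iff _ _).mpr fun t => ?_,
        ascentsStartAtZero_revZeroAt _⟩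
      simp only [indexedParkingFunction, Function.comp_apply, Equiv.symm_apply_apply]
      rcases eq_or_ne t i.succ with rfl | ht
      · exact Or.inr ⟨by simp, by simp⟩
      · exact Or.inl (by simp [Function.update_of_ne ht])
  · rintro ⟨ρ, hf, hρ⟩
    rw [hρ.eq_revZeroAt, isParkingPerm_revZeroAt_iff] at hf
    generalize ρ.symm 0 = j at hf
    by_cases hall : ∀ t, f (revZeroAt j t) = t
    · refine ⟨.inl j, funext fun c => ?_⟩
      simpa [indexedParkingFunction] using (hall ((revZeroAt j).symm c)).symm
    obtain ⟨t₀, ht₀⟩ := not_forall.mp hall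
    obtain ⟨hf₀, ht₀j⟩ := (hf t₀).resolve_left ht₀
    obtain ⟨i, rfl⟩ : ∃ i : Fin m, i.castSucc = j := by
      refine Fin.exists_castSucc_eq.mpr fun hj => ?_
      rw [hj, Fin.val_last] at ht₀j
      exact absurd t₀.isLt (by omega)
    have ht₀i : t₀ = i.succ := Fin.ext (by simp [ht₀j])
    refine ⟨.inr i, (Equiv.comp_symm_eq _ _ _).mpr (funext fun t => ?_)⟩
    rcases eq_or_ne t i.succ with rfl | ht
    · simp [← ht₀i, hf₀]
    · rw [Function.update_of_ne ht, id, Function.comp_apply]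
      exact ((hf t).resolve_right fun ⟨_, htj⟩ => ht (Fin.ext (by simp [htj]))).symm

end

theorem stmt8 (n : ℕ) (hn : 1 ≤ n) :
    pk n [p123, p213, p231] = 2 * n - 1 := by
  obtain ⟨m, rfl⟩ := Nat.exists_eq_add_of_le' hn
  have key (f : Fin (m + 1) → Fin (m + 1)) :
      (IsParkingFunction f ∧ ∃ ρ, IsParkingPerm f ρ ∧ AvoidsAll ρ [p123, p213, p231]) ↔
        f ∈ Set.range indexedParkingFunction := by
    simp only [avoidsAll_iff_ascentsStartAtZero, mem_range_indexedParkingFunction_iff]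
    exact and_iff_right_of_imp fun ⟨_, h, _⟩ => h.isParkingFunction
  rw [pk, Nat.card_congr (Equiv.subtypeEquivRight key),
    Nat.card_range_of_injective indexedParkingFunction_injective, Nat.card_eq_fintype_card,
    Fintype.card_sum, Fintype.card_fin, Fintype.card_fin]
  omega
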